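/- arXiv:0810.0776 — 2 statements merged into one kernel-verified Lean document; each statement's English description precedes it below -/
import Mathlib

section
/- Let h : ℝⁿ → ℝ be continuous and x : [0, T] → ℝⁿ be absolutely continuous with the map t ↦ h(x(t)) absolutely continuous. Suppose ε̂ < b, h(x(0)) ≤ ε̂, and whenever ε̂ < h(x(t)) < b and (d/dt)h(x(t)) exists, (d/dt)h(x(t)) ≤ 0. Then h(x(t)) ≤ ε̂ for all t ∈ [0, T]. -/
/-!
Let `t₀` be a time with `g t₀ ≤ ε̂`, where `g = h ∘ x`. By continuity `g < b` just after `t₀`; if `g`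
exceeded `ε̂` throughout some `(t₀, u]` there, then `g` would lie in the band `(ε̂, b)` on `(t₀, u)`,
where `g' ≤ 0`, so `g u ≤ g t₀ ≤ ε̂`, a contradiction. Hence the closed set `{g ≤ ε̂}` has points
arbitrarily close to the right of each of its points, and real induction spreads it over `[0, T]`.
-/

open Set Filter Topology MeasureTheory

theorem ContinuousOn.le_of_nonincreasing_in_band {g : ℝ → ℝ} {a c ε b : ℝ}
    (hg : ContinuousOn g (Icc a c)) (hεb : ε < b) (ha : g a ≤ ε)
    (hband : ∀ s ∈ Icc a c, ∀ u ∈ Icc a c, s < u →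
      (∀ v ∈ Ioo s u, ε < g v ∧ g v < b) → g u ≤ g s) :
    ∀ t ∈ Icc a c, g t ≤ ε := by
  have hclosed : IsClosed ({t | g t ≤ ε} ∩ Icc a c) := by
    rw [inter_comm]
    exact hg.preimage_isClosed_of_isClosed isClosed_Icc isClosed_Iic
  refine fun t ht ↦ hclosed.Icc_subset_of_forall_exists_gt ha ?_ ht
  rintro x ⟨hxε : g x ≤ ε, hxa, hxc⟩ y hxy
  have hbelow : {v | g v < b} ∈ 𝓝[>] x :=
    ((hg x ⟨hxa, hxc.le⟩).mono_of_mem_nhdsWithin (Icc_mem_nhdsGT_of_mem ⟨hxa, hxc⟩))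
      (Iio_mem_nhds (hxε.trans_lt hεb))
  obtain ⟨w, hxw, hwb⟩ := (mem_nhdsGT_iff_exists_Ioo_subset' (lt_min hxy hxc)).1 hbelow
  set u := min w (min y c)
  have hxu : x < u := lt_min hxw (lt_min hxy hxc)
  have huy : u ≤ y := (min_le_right _ _).trans (min_le_left _ _)
  have huc : u ≤ c := (min_le_right _ _).trans (min_le_right _ _)
  by_contra hnone
  have habove : ∀ v ∈ Ioc x u, ε < g v := fun v hv ↦
    not_le.1 fun hvε ↦ hnone ⟨v, hvε, hv.1, hv.2.trans huy⟩
  have hdecr : g u ≤ g x := hband x ⟨hxa, hxc.le⟩ u ⟨hxa.trans hxu.le, huc⟩ hxu fun v hv ↦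
    ⟨habove v ⟨hv.1, hv.2.le⟩, hwb ⟨hv.1, hv.2.trans_le (min_le_left _ _)⟩⟩
  linarith [habove u ⟨hxu, le_rfl⟩]

theorem le_of_eq_add_integral_of_ae_nonpos {g g' : ℝ → ℝ} {s u : ℝ} (hsu : s ≤ u)
    (hg : g u = g s + ∫ v in s..u, g' v) (hneg : ∀ᵐ v, v ∈ Ioo s u → g' v ≤ 0) :
    g u ≤ g s := by
  have : 0 ≤ ∫ v in s..u, -g' v := by
    refine intervalIntegral.integral_nonneg_of_ae_restrict hsu ?_
    rw [Measure.restrict_congr_set Ioo_ae_eq_Icc.symm, EventuallyLE, ae_restrict_iff' measurableSet_Ioo]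
    filter_upwards [hneg] with v hv hvsu
    simpa using hv hvsu
  rw [intervalIntegral.integral_neg] at this
  linarith

theorem stmt_1_general {n : ℕ} (h : (Fin n → ℝ) → ℝ) (hh : Continuous h)
    (T εhat b : ℝ) (hεb : εhat < b)
    (x : ℝ → Fin n → ℝ) (hx : ContinuousOn x (Set.Icc 0 T))
    (g' : ℝ → ℝ)
    (hint : ∀ t ∈ Set.Icc (0:ℝ) T, IntervalIntegrable g' volume 0 t)
    (hac : ∀ t ∈ Set.Icc (0:ℝ) T, h (x t) = h (x 0) + ∫ s in (0:ℝ)..t, g' s)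
    (h0 : h (x 0) ≤ εhat)
    (hder : ∀ᵐ t ∂volume, t ∈ Set.Icc (0:ℝ) T →
      (εhat < h (x t) ∧ h (x t) < b) → g' t ≤ 0) :
    ∀ t ∈ Set.Icc (0:ℝ) T, h (x t) ≤ εhat := by
  refine (hh.comp_continuousOn hx).le_of_nonincreasing_in_band hεb h0 ?_
  intro s hs u hu hsu hband
  refine le_of_eq_add_integral_of_ae_nonpos (g' := g') hsu.le ?_ ?_
  · have hsplit := intervalIntegral.integral_interval_sub_left (hint u hu) (hint s hs)
    simp only [Function.comp_apply, hac u hu, hac s hs]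
    linarith
  · filter_upwards [hder] with v hv hvsu
    exact hv ⟨hs.1.trans hvsu.1.le, hvsu.2.le.trans hu.2⟩ (hband v hvsu)

/-- Positive invariance of the sublevel set `{h ≤ ε̂}`: if `g(t) = h(x(t))` is absolutely
continuous (expressed via the integral identity), starts at or below `ε̂ < b`, and cannot
increase while strictly between `ε̂` and `b`, then it stays at or below `ε̂` on `[0,T]`. -/
theorem stmt_1 {n : ℕ} (h : (Fin n → ℝ) → ℝ) (hh : Continuous h)
    (T εhat b : ℝ) (hT : 0 ≤ T) (hεb : εhat < b)
    (x : ℝ → Fin n → ℝ) (hx : ContinuousOn x (Set.Icc 0 T))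
    (g' : ℝ → ℝ)
    (hint : ∀ t ∈ Set.Icc (0:ℝ) T, IntervalIntegrable g' volume 0 t)
    (hac : ∀ t ∈ Set.Icc (0:ℝ) T, h (x t) = h (x 0) + ∫ s in (0:ℝ)..t, g' s)
    (h0 : h (x 0) ≤ εhat)
    (hder : ∀ᵐ t ∂volume, t ∈ Set.Icc (0:ℝ) T →
      (εhat < h (x t) ∧ h (x t) < b) → g' t ≤ 0) :
    ∀ t ∈ Set.Icc (0:ℝ) T, h (x t) ≤ εhat :=
  stmt_1_general h hh T εhat b hεb x hx g' hint hac h0 hder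
end

section
/- Consider ẋ₁ = γ̃(x₁)(1 - exp(x₂)) type coupling: specifically, for the system (3.5) with a = b = m = 0, the feedback k(x) := -D_s + μ̃(x₁)·exp(x₂)·φ(x₁) with φ : ℝ → ℝ⁺ locally Lipschitz, φ(0) = 1, φ(x) < 1 for x > 0, φ(x) > 1 for x < 0, yields for V(x) = γ(x₁) + β(x₂) (with γ, β satisfying the monotonicity conditions x γ'(x) > 0, x β'(x) > 0 for x ≠ 0): V̇ = γ'(x₁)(c·exp(-x₁)+1)·μ̃(x₁)·exp(x₂)·(φ(x₁) - 1) + β'(x₂)·μ̃(x₁)·(1 - exp(x₂)) < 0 for all x ≠ 0. -/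
/-!
Each summand of `V̇` is the product of a factor with the sign of `x_i` (namely `γ'(x₁)` or
`β'(x₂)`) with a factor of the opposite sign (`φ(x₁) - 1` or `1 - e^{x₂}`) that vanishes at `0`,
times a positive weight. So both summands are nonpositive, and the one with `x_i ≠ 0` is negative.
-/

open Real

section SignReversing

variable {g h : ℝ → ℝ}

lemma mul_neg_of_sign_reversing (hpos : ∀ x, 0 < x → h x < 0) (hneg : ∀ x, x < 0 → 0 < h x)
    {x : ℝ} (hx : x ≠ 0) : x * h x < 0 := by
  rcases hx.lt_or_gt with hx | hx
  · exact mul_neg_of_neg_of_pos hx (hneg x hx)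
  · exact mul_neg_of_pos_of_neg hx (hpos x hx)

lemma mul_neg_of_mul_pos_of_mul_neg {x a b : ℝ} (ha : 0 < x * a) (hb : x * b < 0) :
    a * b < 0 :=
  neg_of_mul_neg_right (a := x ^ 2) (by linear_combination mul_neg_of_pos_of_neg ha hb)
    (sq_nonneg x)

lemma mul_sign_reversing_neg (hg : ∀ x, x ≠ 0 → 0 < x * g x) (hpos : ∀ x, 0 < x → h x < 0)
    (hneg : ∀ x, x < 0 → 0 < h x) {x : ℝ} (hx : x ≠ 0) : g x * h x < 0 :=
  mul_neg_of_mul_pos_of_mul_neg (hg x hx) (mul_neg_of_sign_reversing hpos hneg hx)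

lemma mul_sign_reversing_nonpos (hg : ∀ x, x ≠ 0 → 0 < x * g x) (hpos : ∀ x, 0 < x → h x < 0)
    (hneg : ∀ x, x < 0 → 0 < h x) (h0 : h 0 = 0) (x : ℝ) : g x * h x ≤ 0 := by
  rcases eq_or_ne x 0 with rfl | hx
  · simp [h0]
  · exact (mul_sign_reversing_neg hg hpos hneg hx).le

end SignReversing

lemma add_mul_neg_of_nonpos_of_neg_or {a b p q : ℝ} (ha : a ≤ 0) (hb : b ≤ 0)
    (hab : a < 0 ∨ b < 0) (hp : 0 < p) (hq : 0 < q) : a * p + b * q < 0 := by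
  rcases hab with ha' | hb'
  · exact add_neg_of_neg_of_nonpos (mul_neg_of_neg_of_pos ha' hp)
      (mul_nonpos_of_nonpos_of_nonneg hb hq.le)
  · exact add_neg_of_nonpos_of_neg (mul_nonpos_of_nonpos_of_nonneg ha hp.le)
      (mul_neg_of_neg_of_pos hb' hq)

theorem stmt_14_general (c : ℝ) (hc : 0 < c) (μt : ℝ → ℝ) (hμtpos : ∀ x, 0 < μt x) (φ : ℝ → ℝ)
    (hφ0 : φ 0 = 1) (hφlt : ∀ x : ℝ, 0 < x → φ x < 1) (hφgt : ∀ x : ℝ, x < 0 → 1 < φ x)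
    (γ' β' : ℝ → ℝ)
    (hγ' : ∀ x : ℝ, x ≠ 0 → 0 < x * γ' x) (hβ' : ∀ x : ℝ, x ≠ 0 → 0 < x * β' x) :
    ∀ x1 x2 : ℝ, (x1, x2) ≠ ((0 : ℝ), (0 : ℝ)) →
      γ' x1 * (c * Real.exp (-x1) + 1) * μt x1 * Real.exp x2 * (φ x1 - 1) +
        β' x2 * μt x1 * (1 - Real.exp x2) < 0 := by
  intro x1 x2 hx
  have hφpos : ∀ x, 0 < x → φ x - 1 < 0 := fun x h => sub_neg.mpr (hφlt x h)
  have hφneg : ∀ x, x < 0 → 0 < φ x - 1 := fun x h => sub_pos.mpr (hφgt x h)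
  have hexppos : ∀ x, 0 < x → 1 - exp x < 0 := fun _ h => sub_neg.mpr (one_lt_exp_iff.mpr h)
  have hexpneg : ∀ x, x < 0 → 0 < 1 - exp x := fun _ h => sub_pos.mpr (exp_lt_one_iff.mpr h)
  have hne : x1 ≠ 0 ∨ x2 ≠ 0 := by
    by_contra! h
    exact hx (by rw [h.1, h.2])
  have key := add_mul_neg_of_nonpos_of_neg_or
    (mul_sign_reversing_nonpos hγ' hφpos hφneg (by simp [hφ0]) x1)
    (mul_sign_reversing_nonpos hβ' hexppos hexpneg (by simp) x2)
    (hne.imp (mul_sign_reversing_neg hγ' hφpos hφneg) (mul_sign_reversing_neg hβ' hexppos hexpneg))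
    (by have := hμtpos x1; positivity : 0 < (c * exp (-x1) + 1) * μt x1 * exp x2) (hμtpos x1)
  linear_combination key

/-- For system (3.5) with the feedback `k(x) = -D_s + μ̃(x₁) e^{x₂} φ(x₁)`, the derivative of
`V(x) = γ(x₁) + β(x₂)` satisfies
`V̇ = γ'(x₁)(c e^{-x₁}+1) μ̃(x₁) e^{x₂} (φ(x₁)-1) + β'(x₂) μ̃(x₁)(1-e^{x₂}) < 0` for `x ≠ 0`. -/
theorem stmt_14 (c Ds μmax : ℝ) (hc : 0 < c) (hDs : 0 < Ds)
    (μt : ℝ → ℝ) (hμtc : Continuous μt)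
    (hμtpos : ∀ x, 0 < μt x) (hμtb : ∀ x, μt x ≤ μmax)
    (φ : ℝ → ℝ) (hφ : LocallyLipschitz φ) (hφpos : ∀ x, 0 ≤ φ x)
    (hφ0 : φ 0 = 1) (hφlt : ∀ x : ℝ, 0 < x → φ x < 1) (hφgt : ∀ x : ℝ, x < 0 → 1 < φ x)
    (γ β : ℝ → ℝ) (γ' β' : ℝ → ℝ)
    (hγd : ∀ x, HasDerivAt γ (γ' x) x) (hβd : ∀ x, HasDerivAt β (β' x) x)
    (hγ' : ∀ x : ℝ, x ≠ 0 → 0 < x * γ' x) (hβ' : ∀ x : ℝ, x ≠ 0 → 0 < x * β' x) :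
    ∀ x1 x2 : ℝ, (x1, x2) ≠ ((0 : ℝ), (0 : ℝ)) →
      γ' x1 * (c * Real.exp (-x1) + 1) * μt x1 * Real.exp x2 * (φ x1 - 1) +
        β' x2 * μt x1 * (1 - Real.exp x2) < 0 :=
  stmt_14_general c hc μt hμtpos φ hφ0 hφlt hφgt γ' β' hγ' hβ'
end
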